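/- (Fixed-point / self-consistency of the global minimum.) min over {Q̃W̃ : D^t(Q̃W̃, Q̃₀W̃₀) < ∞} of E₀^t(ρ,η,Q̃W̃) equals min over {QW : D^t(QW, Q̃₀W̃₀) < ∞} of F^t(ρ,η,QW,QW) = min over such QW of { D(W‖P|Q) − ρI(Q,W) + ηE_Q[f(X)] }. In words: the double minimization over (reference distribution, argument distribution) is achieved on the diagonal Q̃W̃ = QW. -/

import Mathlib

/-!
Since `D^t ≥ 0`, `D^t(QW, QW) = 0` and `1 - ρ > 0`, we have
`F^t(QW, Q̃W̃) = F^t(QW, QW) + (1 - ρ) D^t(QW, Q̃W̃) ≥ F^t(QW, QW)`, so each inner minimum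
`E₀^t(Q̃W̃)` dominates the diagonal minimum, as long as every `QW` with `F^t(QW, Q̃W̃) < ∞` is
admissible. It is: finiteness of `D^t` means absolute continuity of the marginals and
conditionals carrying positive weight, and that relation is transitive, so
`D^t(QW, Q̃W̃) < ∞` and `D^t(Q̃W̃, Q̃₀W̃₀) < ∞` give `D^t(QW, Q̃₀W̃₀) < ∞`. Conversely
`E₀^t(QW) ≤ F^t(QW, QW)`.
-/

open scoped BigOperators
open Filter Topology

/-- A joint probability distribution on `X × Y`, given by a nonnegative
pmf `p` summing to one. -/
structure JointDist (X Y : Type) [Fintype X] [Fintype Y] where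
  p : X → Y → ℝ
  nonneg : ∀ x y, 0 ≤ p x y
  sum_one : ∑ x : X, ∑ y : Y, p x y = 1

namespace JointDist

variable {X Y : Type} [Fintype X] [Fintype Y]

/-- `X`-marginal `Q`. -/
noncomputable def Qm (μ : JointDist X Y) (x : X) : ℝ := ∑ y : Y, μ.p x y

/-- `Y`-marginal `T`. -/
noncomputable def Tm (μ : JointDist X Y) (y : Y) : ℝ := ∑ x : X, μ.p x y

/-- Conditional distribution `W(y|x)`. -/
noncomputable def Wc (μ : JointDist X Y) (x : X) (y : Y) : ℝ :=
  if μ.Qm x = 0 then 0 else μ.p x y / μ.Qm x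

/-- Conditional distribution `V(x|y)`. -/
noncomputable def Vc (μ : JointDist X Y) (y : Y) (x : X) : ℝ :=
  if μ.Tm y = 0 then 0 else μ.p x y / μ.Tm y

end JointDist

/-- Kullback–Leibler divergence `D(p‖q)` between finite nonnegative vectors,
valued in `EReal`, with the conventions `0 log 0 = 0` and `D = ⊤` if
absolute continuity fails. -/
noncomputable def relEnt {Z : Type} [Fintype Z] (p q : Z → ℝ) : EReal :=
  if ∀ z, q z = 0 → p z = 0 then
    (((∑ z : Z, if p z = 0 then 0 else p z * Real.log (p z / q z)) : ℝ) : EReal)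
  else ⊤

/-- Conditional KL divergence `D(w‖w'|q) = ∑_a q(a) D(w(·|a)‖w'(·|a))`,
valued in `EReal` with the usual conventions. -/
noncomputable def condRelEnt {A B : Type} [Fintype A] [Fintype B]
    (q : A → ℝ) (w w' : A → B → ℝ) : EReal :=
  if ∀ a b, q a ≠ 0 → w' a b = 0 → w a b = 0 then
    (((∑ a : A, ∑ b : B, if q a * w a b = 0 then 0
        else q a * w a b * Real.log (w a b / w' a b)) : ℝ) : EReal)
  else ⊤

variable {X Y : Type}

/-- The weighted divergence combination
`D^t(QW, Q'W') = t₁ D(Q‖Q') + t₂ D(W‖W'|Q) + t₃ D(T‖T') + t₄ D(V‖V'|T)`. -/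
noncomputable def Dt [Fintype X] [Fintype Y] (t : Fin 4 → ℝ)
    (μ ν : JointDist X Y) : EReal :=
  (t 0 : EReal) * relEnt μ.Qm ν.Qm + (t 1 : EReal) * condRelEnt μ.Qm μ.Wc ν.Wc +
  (t 2 : EReal) * relEnt μ.Tm ν.Tm + (t 3 : EReal) * condRelEnt μ.Tm μ.Vc ν.Vc

/-- `D(W‖P|Q)` for the channel `P`. -/
noncomputable def condDivP [Fintype X] [Fintype Y] (P : X → Y → ℝ)
    (μ : JointDist X Y) : EReal :=
  condRelEnt μ.Qm μ.Wc P

/-- Mutual information `I(Q,W)` of the joint law `QW`. -/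
noncomputable def mutInfo [Fintype X] [Fintype Y] (μ : JointDist X Y) : ℝ :=
  ∑ x : X, ∑ y : Y, if μ.p x y = 0 then 0
    else μ.p x y * Real.log (μ.p x y / (μ.Qm x * μ.Tm y))

/-- Expected cost `E_Q[f(X)]`. -/
noncomputable def expCost [Fintype X] [Fintype Y] (f : X → ℝ)
    (μ : JointDist X Y) : ℝ :=
  ∑ x : X, μ.Qm x * f x

/-- `F₁^t(QW, Q̃W̃) = D(W‖P|Q) + D^t(QW, Q̃W̃)`. -/
noncomputable def F1 [Fintype X] [Fintype Y] (P : X → Y → ℝ) (t : Fin 4 → ℝ)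
    (μ ν : JointDist X Y) : EReal :=
  condDivP P μ + Dt t μ ν

/-- `F₂(QW, R) = D(W‖P|Q) − I(Q,W) + R`. -/
noncomputable def F2 [Fintype X] [Fintype Y] (P : X → Y → ℝ) (R : ℝ)
    (μ : JointDist X Y) : EReal :=
  condDivP P μ - ((mutInfo μ : ℝ) : EReal) + ((R : ℝ) : EReal)

/-- `F^t(QW, Q̃W̃, R) = max{F₁^t(QW, Q̃W̃), F₂(QW, R)}`. -/
noncomputable def Fr [Fintype X] [Fintype Y] (P : X → Y → ℝ) (t : Fin 4 → ℝ)
    (R : ℝ) (μ ν : JointDist X Y) : EReal :=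
  max (F1 P t μ ν) (F2 P R μ)

/-- `E_c^t(Q̃W̃, R, α)`: the constrained minimum of `F^t(·, Q̃W̃, R)`. -/
noncomputable def Ec [Fintype X] [Fintype Y] (P : X → Y → ℝ) (t : Fin 4 → ℝ)
    (f : X → ℝ) (R α : ℝ) (ν : JointDist X Y) : EReal :=
  sInf ((fun μ => Fr P t R μ ν) '' {μ : JointDist X Y | expCost f μ ≤ α})

/-- `F^t(ρ, η, QW, Q̃W̃) = D(W‖P|Q) − ρ I(Q,W) + η E_Q[f] + (1−ρ) D^t(QW, Q̃W̃)`. -/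
noncomputable def Fslope [Fintype X] [Fintype Y] (P : X → Y → ℝ) (t : Fin 4 → ℝ)
    (f : X → ℝ) (ρ η : ℝ) (μ ν : JointDist X Y) : EReal :=
  condDivP P μ - ((ρ * mutInfo μ : ℝ) : EReal) + ((η * expCost f μ : ℝ) : EReal)
    + ((1 - ρ : ℝ) : EReal) * Dt t μ ν

/-- `E₀^t(ρ, η, Q̃W̃)`: the unconstrained minimum of `F^t(ρ, η, ·, Q̃W̃)`. -/
noncomputable def E0 [Fintype X] [Fintype Y] (P : X → Y → ℝ) (t : Fin 4 → ℝ)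
    (f : X → ℝ) (ρ η : ℝ) (ν : JointDist X Y) : EReal :=
  sInf (Set.range (fun μ : JointDist X Y => Fslope P t f ρ η μ ν))


open Real

section KLDivergence

variable {Z : Type} [Fintype Z]

noncomputable def klSum (p q : Z → ℝ) : ℝ :=
  ∑ z, if p z = 0 then 0 else p z * log (p z / q z)

lemma klSum_self (p : Z → ℝ) : klSum p p = 0 :=
  Finset.sum_eq_zero fun z _ => by
    split_ifs with h
    · rfl
    · rw [div_self h, log_one, mul_zero]

lemma sub_le_mul_log_div {p q : ℝ} (hp : 0 < p) (hq : 0 < q) : p - q ≤ p * log (p / q) := by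
  have h := one_sub_inv_le_log_of_pos (div_pos hp hq)
  rw [inv_div] at h
  calc p - q = p * (1 - q / p) := by field_simp
    _ ≤ p * log (p / q) := mul_le_mul_of_nonneg_left h hp.le

lemma sum_sub_le_klSum {p q : Z → ℝ} (hp : ∀ z, 0 ≤ p z) (hq : ∀ z, 0 ≤ q z)
    (hpq : ∀ z, q z = 0 → p z = 0) : ∑ z, (p z - q z) ≤ klSum p q :=
  Finset.sum_le_sum fun z _ => by
    split_ifs with h
    · linarith [hq z]
    · exact sub_le_mul_log_div ((hp z).lt_of_ne' h) ((hq z).lt_of_ne' fun h' => h (hpq z h'))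

lemma klSum_nonneg {p q : Z → ℝ} (hp : ∀ z, 0 ≤ p z) (hq : ∀ z, 0 ≤ q z)
    (hpq : ∀ z, q z = 0 → p z = 0) (hsum : ∑ z, q z ≤ ∑ z, p z) : 0 ≤ klSum p q := by
  have h := sum_sub_le_klSum hp hq hpq
  rw [Finset.sum_sub_distrib] at h
  linarith

lemma relEnt_self (p : Z → ℝ) : relEnt p p = 0 := by
  rw [relEnt, if_pos fun _ h => h]
  exact_mod_cast klSum_self p

lemma relEnt_nonneg {p q : Z → ℝ} (hp : ∀ z, 0 ≤ p z) (hq : ∀ z, 0 ≤ q z)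
    (hsum : ∑ z, q z ≤ ∑ z, p z) : 0 ≤ relEnt p q := by
  unfold relEnt
  split_ifs with hpq
  · exact EReal.coe_nonneg.2 (klSum_nonneg hp hq hpq hsum)
  · exact le_top

lemma relEnt_ne_top_iff {p q : Z → ℝ} : relEnt p q ≠ ⊤ ↔ ∀ z, q z = 0 → p z = 0 := by
  unfold relEnt
  split_ifs with h <;> simpa using h

lemma relEnt_ne_top_trans {p q r : Z → ℝ} (h₁ : relEnt p q ≠ ⊤) (h₂ : relEnt q r ≠ ⊤) :
    relEnt p r ≠ ⊤ := by
  rw [relEnt_ne_top_iff] at *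
  exact fun z hz => h₁ z (h₂ z hz)

end KLDivergence

section CondKLDivergence

variable {A B : Type} [Fintype A] [Fintype B]

lemma ite_mul_mul_log_div (c p q : ℝ) :
    (if c * p = 0 then 0 else c * p * log (p / q)) = c * if p = 0 then 0 else p * log (p / q) := by
  by_cases hc : c = 0 <;> simp [hc, mul_assoc]

lemma condRelEnt_eq (q : A → ℝ) (w w' : A → B → ℝ) :
    condRelEnt q w w' = if ∀ a b, q a ≠ 0 → w' a b = 0 → w a b = 0 then
      ((∑ a, q a * klSum (w a) (w' a) : ℝ) : EReal) else ⊤ := by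
  simp only [condRelEnt, klSum, Finset.mul_sum, ite_mul_mul_log_div]

lemma condRelEnt_self (q : A → ℝ) (w : A → B → ℝ) : condRelEnt q w w = 0 := by
  rw [condRelEnt_eq, if_pos fun _ _ _ h => h]
  simp [klSum_self]

lemma condRelEnt_nonneg {q : A → ℝ} {w w' : A → B → ℝ} (hq : ∀ a, 0 ≤ q a)
    (hw : ∀ a b, 0 ≤ w a b) (hw' : ∀ a b, 0 ≤ w' a b)
    (hsum : ∀ a, q a ≠ 0 → ∑ b, w' a b ≤ ∑ b, w a b) : 0 ≤ condRelEnt q w w' := by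
  rw [condRelEnt_eq]
  split_ifs with hww'
  · refine EReal.coe_nonneg.2 (Finset.sum_nonneg fun a _ => ?_)
    by_cases ha : q a = 0
    · simp [ha]
    · exact mul_nonneg (hq a) (klSum_nonneg (hw a) (hw' a) (fun b => hww' a b ha) (hsum a ha))
  · exact le_top

lemma condRelEnt_ne_bot (q : A → ℝ) (w w' : A → B → ℝ) : condRelEnt q w w' ≠ ⊥ := by
  unfold condRelEnt
  split_ifs <;> simp

lemma condRelEnt_ne_top_iff {q : A → ℝ} {w w' : A → B → ℝ} :
    condRelEnt q w w' ≠ ⊤ ↔ ∀ a b, q a ≠ 0 → w' a b = 0 → w a b = 0 := by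
  unfold condRelEnt
  split_ifs with h <;> simpa using h

lemma condRelEnt_ne_top_trans {q q' : A → ℝ} {w w' w'' : A → B → ℝ}
    (hw : ∀ a, q a ≠ 0 → ∑ b, w a b = 1) (hw' : ∀ a, q' a = 0 → ∀ b, w' a b = 0)
    (h₁ : condRelEnt q w w' ≠ ⊤) (h₂ : condRelEnt q' w' w'' ≠ ⊤) :
    condRelEnt q w w'' ≠ ⊤ := by
  rw [condRelEnt_ne_top_iff] at *
  intro a b ha hb
  have hq'a : q' a ≠ 0 := by
    intro hq'a
    have hsum := hw a ha
    rw [Finset.sum_eq_zero fun b _ => h₁ a b ha (hw' a hq'a b)] at hsum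
    exact zero_ne_one hsum
  exact h₁ a b ha (h₂ a b hq'a hb)

end CondKLDivergence

lemma EReal.coe_mul_ne_top_iff_of_nonneg {c : ℝ} (hc : 0 ≤ c) {x : EReal} :
    (c : EReal) * x ≠ ⊤ ↔ c = 0 ∨ x ≠ ⊤ := by
  rcases hc.eq_or_lt with rfl | hc
  · simp
  · induction x using EReal.rec with
    | bot => simp [EReal.coe_mul_bot_of_pos hc]
    | coe x => simp [← EReal.coe_mul, hc.ne']
    | top => simp [EReal.coe_mul_top_of_pos hc, hc.ne']

lemma EReal.add_ne_top_iff_of_nonneg {x y : EReal} (hx : 0 ≤ x) (hy : 0 ≤ y) :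
    x + y ≠ ⊤ ↔ x ≠ ⊤ ∧ y ≠ ⊤ :=
  EReal.add_ne_top_iff_ne_top₂ (ne_bot_of_le_ne_bot EReal.zero_ne_bot hx)
    (ne_bot_of_le_ne_bot EReal.zero_ne_bot hy)

namespace JointDist

variable [Fintype X] [Fintype Y]

/-- The law of `(Y, X)`: its `Qm` and `Wc` are definitionally `Tm` and `Vc` of `μ`. -/
def swap (μ : JointDist X Y) : JointDist Y X where
  p y x := μ.p x y
  nonneg y x := μ.nonneg x y
  sum_one := by rw [Finset.sum_comm]; exact μ.sum_one

lemma Qm_nonneg (μ : JointDist X Y) (x : X) : 0 ≤ μ.Qm x :=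
  Finset.sum_nonneg fun y _ => μ.nonneg x y

lemma Wc_nonneg (μ : JointDist X Y) (x : X) (y : Y) : 0 ≤ μ.Wc x y := by
  unfold Wc
  split_ifs
  · exact le_rfl
  · exact div_nonneg (μ.nonneg x y) (μ.Qm_nonneg x)

lemma Wc_of_Qm_eq_zero (μ : JointDist X Y) {x : X} (h : μ.Qm x = 0) (y : Y) : μ.Wc x y = 0 :=
  if_pos h

lemma sum_Wc (μ : JointDist X Y) {x : X} (h : μ.Qm x ≠ 0) : ∑ y, μ.Wc x y = 1 := by
  simp only [Wc, if_neg h, ← Finset.sum_div]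
  exact div_self h

lemma sum_Wc_le_one (μ : JointDist X Y) (x : X) : ∑ y, μ.Wc x y ≤ 1 := by
  by_cases h : μ.Qm x = 0
  · simp [μ.Wc_of_Qm_eq_zero h]
  · exact (μ.sum_Wc h).le

noncomputable def divQW (a b : ℝ) (μ ν : JointDist X Y) : EReal :=
  (a : EReal) * relEnt μ.Qm ν.Qm + (b : EReal) * condRelEnt μ.Qm μ.Wc ν.Wc

lemma relEnt_Qm_nonneg (μ ν : JointDist X Y) : 0 ≤ relEnt μ.Qm ν.Qm :=
  relEnt_nonneg μ.Qm_nonneg ν.Qm_nonneg (by rw [show ∑ x, μ.Qm x = 1 from μ.sum_one,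
    show ∑ x, ν.Qm x = 1 from ν.sum_one])

lemma condRelEnt_Wc_nonneg (μ ν : JointDist X Y) : 0 ≤ condRelEnt μ.Qm μ.Wc ν.Wc :=
  condRelEnt_nonneg μ.Qm_nonneg μ.Wc_nonneg ν.Wc_nonneg fun x hx => by
    rw [μ.sum_Wc hx]
    exact ν.sum_Wc_le_one x

variable {a b : ℝ}

lemma divQW_nonneg (ha : 0 ≤ a) (hb : 0 ≤ b) (μ ν : JointDist X Y) : 0 ≤ divQW a b μ ν :=
  add_nonneg (EReal.mul_nonneg (EReal.coe_nonneg.2 ha) (relEnt_Qm_nonneg μ ν))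
    (EReal.mul_nonneg (EReal.coe_nonneg.2 hb) (condRelEnt_Wc_nonneg μ ν))

lemma divQW_ne_top_iff (ha : 0 ≤ a) (hb : 0 ≤ b) {μ ν : JointDist X Y} :
    divQW a b μ ν ≠ ⊤ ↔
      (a = 0 ∨ relEnt μ.Qm ν.Qm ≠ ⊤) ∧ (b = 0 ∨ condRelEnt μ.Qm μ.Wc ν.Wc ≠ ⊤) := by
  rw [divQW, EReal.add_ne_top_iff_of_nonneg
      (EReal.mul_nonneg (EReal.coe_nonneg.2 ha) (relEnt_Qm_nonneg μ ν))
      (EReal.mul_nonneg (EReal.coe_nonneg.2 hb) (condRelEnt_Wc_nonneg μ ν)),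
    EReal.coe_mul_ne_top_iff_of_nonneg ha, EReal.coe_mul_ne_top_iff_of_nonneg hb]

lemma divQW_ne_top_trans (ha : 0 ≤ a) (hb : 0 ≤ b) {μ ν ξ : JointDist X Y}
    (h₁ : divQW a b μ ν ≠ ⊤) (h₂ : divQW a b ν ξ ≠ ⊤) : divQW a b μ ξ ≠ ⊤ := by
  rw [divQW_ne_top_iff ha hb] at *
  exact ⟨h₁.1.elim Or.inl fun h => h₂.1.imp id (relEnt_ne_top_trans h),
    h₁.2.elim Or.inl fun h => h₂.2.imp id
      (condRelEnt_ne_top_trans (fun _ => μ.sum_Wc) (fun _ => ν.Wc_of_Qm_eq_zero) h)⟩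

end JointDist

open JointDist

section Divergence

variable [Fintype X] [Fintype Y] {t : Fin 4 → ℝ}

lemma Dt_eq_divQW_add_divQW_swap (μ ν : JointDist X Y) :
    Dt t μ ν = divQW (t 0) (t 1) μ ν + divQW (t 2) (t 3) μ.swap ν.swap := by
  rw [Dt, divQW, divQW, add_assoc]
  rfl

lemma Dt_self (μ : JointDist X Y) : Dt t μ μ = 0 := by
  simp [Dt, relEnt_self, condRelEnt_self]

lemma Dt_nonneg (ht : ∀ i, 0 ≤ t i) (μ ν : JointDist X Y) : 0 ≤ Dt t μ ν := by
  rw [Dt_eq_divQW_add_divQW_swap]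
  exact add_nonneg (divQW_nonneg (ht 0) (ht 1) μ ν) (divQW_nonneg (ht 2) (ht 3) _ _)

lemma Dt_lt_top_trans (ht : ∀ i, 0 ≤ t i) {μ ν ξ : JointDist X Y}
    (h₁ : Dt t μ ν < ⊤) (h₂ : Dt t ν ξ < ⊤) : Dt t μ ξ < ⊤ := by
  have hne : ∀ μ ν : JointDist X Y, Dt t μ ν ≠ ⊤ ↔
      divQW (t 0) (t 1) μ ν ≠ ⊤ ∧ divQW (t 2) (t 3) μ.swap ν.swap ≠ ⊤ := fun μ ν => by
    rw [Dt_eq_divQW_add_divQW_swap, EReal.add_ne_top_iff_of_nonneg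
      (divQW_nonneg (ht 0) (ht 1) μ ν) (divQW_nonneg (ht 2) (ht 3) _ _)]
  rw [lt_top_iff_ne_top, hne] at *
  exact ⟨divQW_ne_top_trans (ht 0) (ht 1) h₁.1 h₂.1, divQW_ne_top_trans (ht 2) (ht 3) h₁.2 h₂.2⟩

end Divergence

section Objective

variable [Fintype X] [Fintype Y] {P : X → Y → ℝ} {t : Fin 4 → ℝ} {f : X → ℝ} {ρ η : ℝ}

lemma Fslope_self (μ : JointDist X Y) :
    Fslope P t f ρ η μ μ =
      condDivP P μ - ((ρ * mutInfo μ : ℝ) : EReal) + ((η * expCost f μ : ℝ) : EReal) := by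
  rw [Fslope, Dt_self, mul_zero, add_zero]

lemma Fslope_eq_Fslope_self_add (μ ν : JointDist X Y) :
    Fslope P t f ρ η μ ν = Fslope P t f ρ η μ μ + ((1 - ρ : ℝ) : EReal) * Dt t μ ν := by
  rw [Fslope_self]
  rfl

lemma Fslope_self_ne_bot (μ : JointDist X Y) : Fslope P t f ρ η μ μ ≠ ⊥ := by
  rw [Fslope_self, sub_eq_add_neg, ← EReal.coe_neg]
  exact EReal.add_ne_bot_iff.2 ⟨EReal.add_ne_bot_iff.2 ⟨condRelEnt_ne_bot _ _ _,
    EReal.coe_ne_bot _⟩, EReal.coe_ne_bot _⟩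

lemma Fslope_self_le (ht : ∀ i, 0 ≤ t i) (hρ : ρ ≤ 1) (μ ν : JointDist X Y) :
    Fslope P t f ρ η μ μ ≤ Fslope P t f ρ η μ ν := by
  rw [Fslope_eq_Fslope_self_add μ ν]
  exact le_add_of_nonneg_right
    (EReal.mul_nonneg (EReal.coe_nonneg.2 (by linarith)) (Dt_nonneg ht μ ν))

lemma Dt_lt_top_of_Fslope_lt_top (ht : ∀ i, 0 ≤ t i) (hρ : ρ < 1) {μ ν : JointDist X Y}
    (h : Fslope P t f ρ η μ ν < ⊤) : Dt t μ ν < ⊤ := by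
  have hρ' : (0 : ℝ) ≤ 1 - ρ := by linarith
  rw [Fslope_eq_Fslope_self_add, lt_top_iff_ne_top, EReal.add_ne_top_iff_ne_top₂
    (Fslope_self_ne_bot μ)
    (ne_bot_of_le_ne_bot EReal.zero_ne_bot
      (EReal.mul_nonneg (EReal.coe_nonneg.2 hρ') (Dt_nonneg ht μ ν))),
    EReal.coe_mul_ne_top_iff_of_nonneg hρ'] at h
  exact lt_top_iff_ne_top.2 (h.2.resolve_left (by linarith))

/-- A competitor `μ` of `E0 ν` with finite value is `Dt`-close to `ν`, hence to `ν₀`. -/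
lemma sInf_Fslope_self_le_E0 (ht : ∀ i, 0 ≤ t i) (hρ : ρ < 1) {ν ν₀ : JointDist X Y}
    (hν : Dt t ν ν₀ < ⊤) :
    sInf ((fun μ => Fslope P t f ρ η μ μ) '' {μ | Dt t μ ν₀ < ⊤}) ≤ E0 P t f ρ η ν := by
  refine le_sInf (Set.forall_mem_range.2 fun μ => ?_)
  by_cases hμ : Fslope P t f ρ η μ ν < ⊤
  · have hμν₀ := Dt_lt_top_trans ht (Dt_lt_top_of_Fslope_lt_top ht hρ hμ) hν
    exact (sInf_le (Set.mem_image_of_mem (fun μ => Fslope P t f ρ η μ μ) hμν₀)).trans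
      (Fslope_self_le ht hρ.le μ ν)
  · rw [not_lt_top_iff.1 hμ]
    exact le_top

end Objective

theorem stmt17_general {X Y : Type} [Fintype X] [Fintype Y]
    (P : X → Y → ℝ) (t : Fin 4 → ℝ) (ht : ∀ i, 0 ≤ t i)
    (f : X → ℝ) (ρ η : ℝ) (hρ1 : ρ < 1)
    (ν₀ : JointDist X Y) :
    sInf ((fun ν => E0 P t f ρ η ν) '' {ν : JointDist X Y | Dt t ν ν₀ < ⊤})
      = sInf ((fun μ => Fslope P t f ρ η μ μ) ''
          {μ : JointDist X Y | Dt t μ ν₀ < ⊤}) ∧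
    sInf ((fun μ => Fslope P t f ρ η μ μ) ''
          {μ : JointDist X Y | Dt t μ ν₀ < ⊤})
      = sInf ((fun μ => condDivP P μ - ((ρ * mutInfo μ : ℝ) : EReal)
            + ((η * expCost f μ : ℝ) : EReal)) ''
          {μ : JointDist X Y | Dt t μ ν₀ < ⊤}) := by
  refine ⟨le_antisymm (le_sInf ?_) (le_sInf ?_), by simp only [Fslope_self]⟩
  · rintro _ ⟨μ, hμ, rfl⟩
    exact (sInf_le (Set.mem_image_of_mem _ hμ)).trans (sInf_le ⟨μ, rfl⟩)
  · rintro _ ⟨ν, hν, rfl⟩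
    exact sInf_Fslope_self_le_E0 ht hρ1 hν

/-- Fixed-point property of the global minimum: the double minimization is
achieved on the diagonal `Q̃W̃ = QW`, where
`F^t(ρ,η,QW,QW) = D(W‖P|Q) − ρI(Q,W) + ηE_Q[f]`. -/
theorem stmt17 {X Y : Type} [Fintype X] [Fintype Y]
    (P : X → Y → ℝ) (hP : ∀ x y, 0 ≤ P x y) (hPsum : ∀ x, ∑ y : Y, P x y = 1)
    (t : Fin 4 → ℝ) (ht : ∀ i, 0 ≤ t i)
    (f : X → ℝ) (ρ η : ℝ) (hρ0 : 0 ≤ ρ) (hρ1 : ρ < 1) (hη : 0 ≤ η)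
    (ν₀ : JointDist X Y) :
    sInf ((fun ν => E0 P t f ρ η ν) '' {ν : JointDist X Y | Dt t ν ν₀ < ⊤})
      = sInf ((fun μ => Fslope P t f ρ η μ μ) ''
          {μ : JointDist X Y | Dt t μ ν₀ < ⊤}) ∧
    sInf ((fun μ => Fslope P t f ρ η μ μ) ''
          {μ : JointDist X Y | Dt t μ ν₀ < ⊤})
      = sInf ((fun μ => condDivP P μ - ((ρ * mutInfo μ : ℝ) : EReal)
            + ((η * expCost f μ : ℝ) : EReal)) ''
          {μ : JointDist X Y | Dt t μ ν₀ < ⊤}) :=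
  stmt17_general P t ht f ρ η hρ1 ν₀
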